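/- arXiv:2306.17332 — 6 statements merged into one kernel-verified Lean document; each statement's English description precedes it below -/
import Mathlib

section
/- Let σ : ℝ → ℝ be non-decreasing and L-Lipschitz, let A be an n × k real matrix and b ∈ ℝⁿ. Define f(x) = −Aᵀ σ(Ax + b) where σ acts componentwise. Then for all x, y ∈ ℝᵏ: ⟨f(x) − f(y), x − y⟩ ≤ −(1/(‖A‖² L)) ‖f(x) − f(y)‖², where ‖A‖ is the operator norm (assume A ≠ 0 and L > 0). -/
/-!
Write `w = σ(Ax + b) - σ(Ay + b)`, so that `f x - f y = -Aᵀ w` and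
`⟪f x - f y, x - y⟫ = -⟪w, A(x - y)⟫`. A monotone `L`-Lipschitz scalar map satisfies
`(σ p - σ q)² ≤ L (σ p - σ q)(p - q)`; summing over the coordinates gives
`‖w‖² ≤ L ⟪w, A(x - y)⟫`, while `‖f x - f y‖ ≤ ‖Aᵀ‖ ‖w‖ = ‖A‖ ‖w‖`.
-/

open scoped RealInnerProductSpace Matrix InnerProduct

theorem Monotone.sub_sq_le_mul_sub_mul_sub {σ : ℝ → ℝ} {L : ℝ} (hmono : Monotone σ)
    (hlip : ∀ a b, |σ a - σ b| ≤ L * |a - b|) (p q : ℝ) :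
    (σ p - σ q) ^ 2 ≤ L * ((σ p - σ q) * (p - q)) := by
  have hprod : 0 ≤ (σ p - σ q) * (p - q) :=
    (monovary_id_iff.mpr hmono).sub_mul_sub_nonneg q p
  calc (σ p - σ q) ^ 2 = |σ p - σ q| * |σ p - σ q| := by rw [← sq_abs, sq]
    _ ≤ L * |p - q| * |σ p - σ q| := by gcongr; exact hlip p q
    _ = L * ((σ p - σ q) * (p - q)) := by
      rw [mul_assoc, ← abs_mul, mul_comm (p - q), abs_of_nonneg hprod]

theorem one_div_mul_sq_le_of_sq_le {a c w L s : ℝ} (hs : 0 ≤ s) (ha : a ^ 2 ≤ c ^ 2 * w ^ 2)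
    (hw : w ^ 2 ≤ L * s) : 1 / (c ^ 2 * L) * a ^ 2 ≤ s := by
  rcases le_or_gt (c ^ 2 * L) 0 with hcL | hcL
  · calc 1 / (c ^ 2 * L) * a ^ 2 ≤ 0 :=
          mul_nonpos_of_nonpos_of_nonneg (one_div_nonpos.mpr hcL) (sq_nonneg a)
      _ ≤ s := hs
  · rw [one_div_mul_eq_div, div_le_iff₀ hcL]
    calc a ^ 2 ≤ c ^ 2 * w ^ 2 := ha
      _ ≤ c ^ 2 * (L * s) := by gcongr
      _ = s * (c ^ 2 * L) := by ring

section Componentwise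

variable {ι : Type*} [Fintype ι]

abbrev componentwise (σ : ℝ → ℝ) (u : EuclideanSpace ℝ ι) : EuclideanSpace ℝ ι :=
  WithLp.toLp 2 fun i => σ (u i)

theorem inner_componentwise_sub_eq_sum (σ : ℝ → ℝ) (u v : EuclideanSpace ℝ ι) :
    ⟪componentwise σ u - componentwise σ v, u - v⟫ =
      ∑ i, (σ (u i) - σ (v i)) * (u i - v i) := by
  simp [PiLp.inner_apply, mul_comm]

theorem inner_componentwise_sub_nonneg {σ : ℝ → ℝ} (hmono : Monotone σ)
    (u v : EuclideanSpace ℝ ι) : 0 ≤ ⟪componentwise σ u - componentwise σ v, u - v⟫ := by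
  rw [inner_componentwise_sub_eq_sum]
  exact Finset.sum_nonneg fun i _ =>
    (monovary_id_iff.mpr hmono).sub_mul_sub_nonneg (v i) (u i)

theorem norm_componentwise_sub_sq_le {σ : ℝ → ℝ} {L : ℝ} (hmono : Monotone σ)
    (hlip : ∀ a b, |σ a - σ b| ≤ L * |a - b|) (u v : EuclideanSpace ℝ ι) :
    ‖componentwise σ u - componentwise σ v‖ ^ 2 ≤
      L * ⟪componentwise σ u - componentwise σ v, u - v⟫ := by
  rw [inner_componentwise_sub_eq_sum, EuclideanSpace.real_norm_sq_eq, Finset.mul_sum]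
  exact Finset.sum_le_sum fun i _ => hmono.sub_sq_le_mul_sub_mul_sub hlip (u i) (v i)

end Componentwise

section Adjoint

variable {E F : Type*} [NormedAddCommGroup E] [InnerProductSpace ℝ E] [CompleteSpace E]
  [NormedAddCommGroup F] [InnerProductSpace ℝ F] [CompleteSpace F]

theorem inner_sub_le_of_eq_neg_adjoint_comp (T : E →L[ℝ] F) (b : F) {g : F → F} {L : ℝ}
    (hg_mono : ∀ u v, 0 ≤ ⟪g u - g v, u - v⟫)
    (hg : ∀ u v, ‖g u - g v‖ ^ 2 ≤ L * ⟪g u - g v, u - v⟫)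
    {f : E → E} (hf : ∀ x, f x = -(T†) (g (T x + b))) (x y : E) :
    ⟪f x - f y, x - y⟫ ≤ -(1 / (‖T‖ ^ 2 * L)) * ‖f x - f y‖ ^ 2 := by
  set w := g (T x + b) - g (T y + b)
  have hTxy : T (x - y) = (T x + b) - (T y + b) := by rw [map_sub]; abel
  have hdiff : f x - f y = -(T†) w := by rw [hf, hf, map_sub]; abel
  have hinner : ⟪f x - f y, x - y⟫ = -⟪w, T (x - y)⟫ := by
    rw [hdiff, inner_neg_left, ContinuousLinearMap.adjoint_inner_left]
  have hnorm : ‖f x - f y‖ ≤ ‖T‖ * ‖w‖ := by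
    rw [hdiff, norm_neg, ← LinearIsometryEquiv.norm_map ContinuousLinearMap.adjoint T]
    exact (T†).le_opNorm w
  rw [hinner, neg_mul, neg_le_neg_iff, hTxy]
  refine one_div_mul_sq_le_of_sq_le (hg_mono _ _) ?_ (hg _ _)
  rw [← mul_pow]
  exact pow_le_pow_left₀ (norm_nonneg _) hnorm 2

end Adjoint

theorem stmt3_general (n k : ℕ) (σ : ℝ → ℝ) (L : ℝ)
    (hmono : Monotone σ) (hlip : ∀ a b, |σ a - σ b| ≤ L * |a - b|)
    (A : Matrix (Fin n) (Fin k) ℝ) (b : EuclideanSpace ℝ (Fin n))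
    (f : EuclideanSpace ℝ (Fin k) → EuclideanSpace ℝ (Fin k))
    (hf : ∀ x, f x = -(Matrix.toEuclideanLin Aᵀ)
      (WithLp.toLp 2 (fun i => σ ((Matrix.toEuclideanLin A x + b) i)))) :
    ∀ x y, ⟪f x - f y, x - y⟫ ≤
      -(1 / (‖LinearMap.toContinuousLinearMap (Matrix.toEuclideanLin A)‖ ^ 2 * L)) *
        ‖f x - f y‖ ^ 2 := by
  have hadj : Matrix.toEuclideanLin Aᵀ = (Matrix.toEuclideanLin A).adjoint := by
    rw [← Matrix.toEuclideanLin_conjTranspose_eq_adjoint,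
      Matrix.conjTranspose_eq_transpose_of_trivial]
  refine inner_sub_le_of_eq_neg_adjoint_comp _ b (inner_componentwise_sub_nonneg hmono)
    (norm_componentwise_sub_sq_le hmono hlip) fun x => ?_
  rw [hf x, hadj]
  rfl

theorem stmt3 (n k : ℕ) (σ : ℝ → ℝ) (L : ℝ) (hL : 0 < L)
    (hmono : Monotone σ) (hlip : ∀ a b, |σ a - σ b| ≤ L * |a - b|)
    (A : Matrix (Fin n) (Fin k) ℝ) (hA : A ≠ 0) (b : EuclideanSpace ℝ (Fin n))
    (f : EuclideanSpace ℝ (Fin k) → EuclideanSpace ℝ (Fin k))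
    (hf : ∀ x, f x = -(Matrix.toEuclideanLin Aᵀ)
      (WithLp.toLp 2 (fun i => σ ((Matrix.toEuclideanLin A x + b) i)))) :
    ∀ x y, ⟪f x - f y, x - y⟫ ≤
      -(1 / (‖LinearMap.toContinuousLinearMap (Matrix.toEuclideanLin A)‖ ^ 2 * L)) *
        ‖f x - f y‖ ^ 2 :=
  stmt3_general n k σ L hmono hlip A b f hf
end

section
/- (Baillon–Haddad, one direction) Let φ : H → ℝ be a Fréchet-differentiable convex function on a real Hilbert space H whose gradient is L-Lipschitz, with L > 0. Then ∇φ is (1/L)-co-coercive: ⟨∇φ(y) − ∇φ(x), y − x⟩ ≥ (1/L)‖∇φ(y) − ∇φ(x)‖² for all x, y ∈ H. -/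
/-!
Convexity gives the subgradient inequality `φ x + ⟪g x, w - x⟫ ≤ φ w`, and the Lipschitz bound on
`g` gives the descent lemma `φ w ≤ φ z + ⟪g z, w - z⟫ + L / 2 * ‖w - z‖ ^ 2`. Combining the two at
the point `w` minimising the quadratic bound yields
`φ x + ⟪g x, z - x⟫ + 1 / (2 * L) * ‖g z - g x‖ ^ 2 ≤ φ z`; adding this to its copy with `x`
and `z` swapped gives co-coercivity.
-/

open scoped RealInnerProductSpace

section NormedSpace

variable {E : Type*} [NormedAddCommGroup E] [NormedSpace ℝ E] {f : E → ℝ}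

open AffineMap

theorem ConvexOn.add_fderiv_le {s : Set E} {f' : E →L[ℝ] ℝ} {x y : E} (hf : ConvexOn ℝ s f)
    (hx : x ∈ s) (hy : y ∈ s) (hd : HasFDerivAt f f' x) : f x + f' (y - x) ≤ f y := by
  let ℓ : ℝ →ᵃ[ℝ] E := lineMap x y
  have hderiv : HasDerivAt (f ∘ ℓ) (f' (y - x)) 0 :=
    (lineMap_apply_zero (k := ℝ) x y ▸ hd).comp_hasDerivAt 0 hasDerivAt_lineMap
  have := (hf.comp_affineMap ℓ).le_slope_of_hasDerivAt (by simpa [ℓ] using hx)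
    (by simpa [ℓ] using hy) zero_lt_one hderiv
  simp only [slope_def_field, Function.comp_apply, ℓ, lineMap_apply_zero,
    lineMap_apply_one] at this
  linarith

theorem le_add_fderiv_add_sq_of_lipschitz_fderiv {f' : E → E →L[ℝ] ℝ} {L : ℝ}
    (hd : ∀ z, HasFDerivAt f (f' z) z) (hlip : ∀ z w, ‖f' z - f' w‖ ≤ L * ‖z - w‖) (x y : E) :
    f y ≤ f x + f' x (y - x) + L / 2 * ‖y - x‖ ^ 2 := by
  let ℓ : ℝ →ᵃ[ℝ] E := lineMap x y
  have hline (t : ℝ) : HasDerivAt (f ∘ ℓ) (f' (ℓ t) (y - x)) t :=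
    (hd _).comp_hasDerivAt t hasDerivAt_lineMap
  have hbound (t : ℝ) :
      HasDerivAt (fun t : ℝ => f x + t * f' x (y - x) + L / 2 * t ^ 2 * ‖y - x‖ ^ 2)
        (f' x (y - x) + L * t * ‖y - x‖ ^ 2) t := by
    generalize f' x (y - x) = a
    generalize ‖y - x‖ ^ 2 = c
    refine ((((hasDerivAt_id t).mul_const a).const_add (f x)).add
      (((hasDerivAt_pow 2 t).const_mul (L / 2)).mul_const c)).congr_deriv (by push_cast; ring)
  have hderiv_le (t : ℝ) (ht : 0 ≤ t) :
      f' (ℓ t) (y - x) ≤ f' x (y - x) + L * t * ‖y - x‖ ^ 2 := by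
    calc f' (ℓ t) (y - x) = f' x (y - x) + (f' (ℓ t) - f' x) (y - x) := by simp
      _ ≤ f' x (y - x) + ‖f' (ℓ t) - f' x‖ * ‖y - x‖ := by
          gcongr; exact (le_abs_self _).trans ((f' (ℓ t) - f' x).le_opNorm _)
      _ ≤ f' x (y - x) + L * ‖t • (y - x)‖ * ‖y - x‖ := by
          gcongr
          rw [← show ℓ t - x = t • (y - x) from lineMap_vsub_left x y t]
          exact hlip _ _
      _ = f' x (y - x) + L * t * ‖y - x‖ ^ 2 := by
          rw [norm_smul, Real.norm_of_nonneg ht]; ring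
  have := image_le_of_deriv_right_le_deriv_boundary (a := 0) (b := 1)
    (fun t _ => (hline t).continuousAt.continuousWithinAt) (fun t _ => (hline t).hasDerivWithinAt)
    (by simp [ℓ]) (fun t _ => (hbound t).continuousAt.continuousWithinAt)
    (fun t _ => (hbound t).hasDerivWithinAt) (fun t ht => hderiv_le t ht.1)
    (Set.right_mem_Icc.2 zero_le_one)
  simpa [ℓ] using this

end NormedSpace

section InnerProductSpace

variable {H : Type*} [NormedAddCommGroup H] [InnerProductSpace ℝ H] [CompleteSpace H]
  {φ : H → ℝ} {g : H → H} {L : ℝ}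

open InnerProductSpace

theorem ConvexOn.add_inner_gradient_le {s : Set H} {g' x y : H} (hφ : ConvexOn ℝ s φ)
    (hx : x ∈ s) (hy : y ∈ s) (hd : HasGradientAt φ g' x) : φ x + ⟪g', y - x⟫ ≤ φ y := by
  simpa [toDual_apply_apply] using hφ.add_fderiv_le hx hy hd.hasFDerivAt

theorem le_add_inner_add_sq_of_lipschitz_gradient (hd : ∀ z, HasGradientAt φ (g z) z)
    (hlip : ∀ z w, ‖g z - g w‖ ≤ L * ‖z - w‖) (x y : H) :
    φ y ≤ φ x + ⟪g x, y - x⟫ + L / 2 * ‖y - x‖ ^ 2 := by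
  have hlip' (z w : H) : ‖toDual ℝ H (g z) - toDual ℝ H (g w)‖ ≤ L * ‖z - w‖ := by
    rw [← map_sub, LinearIsometryEquiv.norm_map]
    exact hlip z w
  simpa [toDual_apply_apply] using
    le_add_fderiv_add_sq_of_lipschitz_fderiv (fun z => (hd z).hasFDerivAt) hlip' x y

theorem ConvexOn.add_inner_add_sq_le_of_lipschitz_gradient (hφ : ConvexOn ℝ Set.univ φ)
    (hd : ∀ z, HasGradientAt φ (g z) z) (hlip : ∀ z w, ‖g z - g w‖ ≤ L * ‖z - w‖) (hL : 0 < L)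
    (x z : H) : φ x + ⟪g x, z - x⟫ + 1 / (2 * L) * ‖g z - g x‖ ^ 2 ≤ φ z := by
  set u := g z - g x
  set w := z - L⁻¹ • u with hw
  have hsub := hφ.add_inner_gradient_le (Set.mem_univ x) (Set.mem_univ w) (hd x)
  have hdesc := le_add_inner_add_sq_of_lipschitz_gradient hd hlip z w
  rw [show w - x = (z - x) - L⁻¹ • u by rw [hw]; abel, inner_sub_right,
    real_inner_smul_right] at hsub
  rw [show w - z = -(L⁻¹ • u) by rw [hw]; abel, inner_neg_right, real_inner_smul_right, norm_neg,
    norm_smul, Real.norm_of_nonneg (inv_nonneg.2 hL.le)] at hdesc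
  have hgap : L⁻¹ * ⟪g z, u⟫ - L⁻¹ * ⟪g x, u⟫ = L⁻¹ * ‖u‖ ^ 2 := by
    rw [← mul_sub, ← inner_sub_left, real_inner_self_eq_norm_sq]
  have hcoef : L⁻¹ * ‖u‖ ^ 2 - L / 2 * (L⁻¹ * ‖u‖) ^ 2 = 1 / (2 * L) * ‖u‖ ^ 2 := by
    field_simp
    ring
  linarith

end InnerProductSpace

theorem stmt6 {H : Type*} [NormedAddCommGroup H] [InnerProductSpace ℝ H] [CompleteSpace H]
    (φ : H → ℝ) (g : H → H) (L : ℝ) (hL : 0 < L)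
    (hconv : ConvexOn ℝ Set.univ φ)
    (hgrad : ∀ x, HasGradientAt φ (g x) x)
    (hlip : ∀ x y, ‖g x - g y‖ ≤ L * ‖x - y‖) :
    ∀ x y : H, ⟪g y - g x, y - x⟫ ≥ (1 / L) * ‖g y - g x‖ ^ 2 := by
  intro x y
  have hxy := hconv.add_inner_add_sq_le_of_lipschitz_gradient hgrad hlip hL x y
  have hyx := hconv.add_inner_add_sq_le_of_lipschitz_gradient hgrad hlip hL y x
  rw [norm_sub_rev, ← neg_sub y x, inner_neg_right] at hyx
  rw [inner_sub_left, show 1 / L = 2 * (1 / (2 * L)) by field_simp]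
  linarith
end

section
/- Let Ξ : ℝⁿ → ℝⁿ be C¹ with symmetric Jacobian DΞ(x) everywhere, and let α ∈ (0,1). If spec(DΞ(x)) ⊆ [1−2α, 1] for all x, then Ξ is α-averaged. -/
/-!
Write `Ξ = (1 - α) • id + α • T` with `T = α⁻¹ • (Ξ - (1 - α) • id)`. Then
`DT x = α⁻¹ • (DΞ x - (1 - α))` is self-adjoint with spectrum in `[-1, 1]`. For a self-adjoint
operator the norm is the spectral radius, so `‖DT x‖ ≤ 1`, and the mean value inequality makes
`T` non-expansive.
-/

section InnerProductSpace

variable {E : Type*} [NormedAddCommGroup E] [InnerProductSpace ℝ E] [CompleteSpace E]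

theorem IsSelfAdjoint.norm_le_of_spectrum_subset_Icc {T : E →L[ℝ] E} (hT : IsSelfAdjoint T)
    {r : ℝ} (hr : 0 ≤ r) (hspec : spectrum ℝ T ⊆ Set.Icc (-r) r) : ‖T‖ ≤ r := by
  have hρ : spectralRadius ℝ T ≤ ENNReal.ofReal r := by
    refine iSup₂_le fun μ hμ => ?_
    rw [← enorm_eq_nnnorm, Real.enorm_eq_ofReal_abs]
    exact ENNReal.ofReal_le_ofReal (abs_le.mpr (hspec hμ))
  rw [T.spectralRadius_eq_nnnorm hT] at hρ
  exact (Real.le_toNNReal_iff_coe_le hr).mp (ENNReal.coe_le_coe.mp hρ)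

theorem IsSelfAdjoint.norm_sub_smul_one_le_of_spectrum_subset_Icc {T : E →L[ℝ] E}
    (hT : IsSelfAdjoint T) {c r : ℝ} (hr : 0 ≤ r)
    (hspec : spectrum ℝ T ⊆ Set.Icc (c - r) (c + r)) : ‖T - c • 1‖ ≤ r := by
  have hshift : IsSelfAdjoint (T - c • 1) := hT.sub ((IsSelfAdjoint.all c).smul (.one _))
  refine hshift.norm_le_of_spectrum_subset_Icc hr ?_
  rw [← Algebra.algebraMap_eq_smul_one, ← spectrum.sub_singleton_eq]
  rintro _ ⟨μ, hμ, _, rfl, rfl⟩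
  obtain ⟨hlow, hup⟩ := hspec hμ
  constructor <;> linarith

end InnerProductSpace

theorem lipschitzWith_one_inv_smul_sub_smul {E : Type*} [NormedAddCommGroup E] [NormedSpace ℝ E]
    {f : E → E} (hf : Differentiable ℝ f) {c r : ℝ}
    (hr : 0 < r) (hderiv : ∀ x, ‖fderiv ℝ f x - c • 1‖ ≤ r) :
    LipschitzWith 1 fun x => r⁻¹ • (f x - c • x) := by
  have hT (x) :
      HasFDerivAt (fun x => r⁻¹ • (f x - c • x)) (r⁻¹ • (fderiv ℝ f x - c • 1)) x :=
    ((hf x).hasFDerivAt.sub ((hasFDerivAt_id x).const_smul c)).const_smul r⁻¹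
  refine lipschitzWith_of_nnnorm_fderiv_le (fun x => (hT x).differentiableAt) fun x => ?_
  rw [(hT x).fderiv, ← NNReal.coe_le_coe, coe_nnnorm, norm_smul,
    Real.norm_of_nonneg (inv_nonneg.mpr hr.le)]
  calc r⁻¹ * ‖fderiv ℝ f x - c • 1‖ ≤ r⁻¹ * r := by gcongr; exact hderiv x
    _ = 1 := inv_mul_cancel₀ hr.ne'

theorem stmt10 (n : ℕ) (Ξ : EuclideanSpace ℝ (Fin n) → EuclideanSpace ℝ (Fin n))
    (hC1 : ContDiff ℝ 1 Ξ)
    (hsym : ∀ x u v, inner ℝ (fderiv ℝ Ξ x u) v = (inner ℝ u (fderiv ℝ Ξ x v) : ℝ))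
    (α : ℝ) (hα : α ∈ Set.Ioo (0 : ℝ) 1)
    (hspec : ∀ x, spectrum ℝ (fderiv ℝ Ξ x) ⊆ Set.Icc (1 - 2 * α) 1) :
    ∃ T : EuclideanSpace ℝ (Fin n) → EuclideanSpace ℝ (Fin n),
      LipschitzWith 1 T ∧ ∀ x, Ξ x = (1 - α) • x + α • T x := by
  have hderiv (x) : ‖fderiv ℝ Ξ x - (1 - α) • 1‖ ≤ α := by
    have hself := ContinuousLinearMap.isSelfAdjoint_iff_isSymmetric.mpr (hsym x)
    exact hself.norm_sub_smul_one_le_of_spectrum_subset_Icc hα.1.le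
      (by convert hspec x using 2 <;> ring)
  refine ⟨fun x => α⁻¹ • (Ξ x - (1 - α) • x), ?_, fun x => ?_⟩
  · exact lipschitzWith_one_inv_smul_sub_smul (hC1.differentiable one_ne_zero) hα.1 hderiv
  · rw [smul_smul, mul_inv_cancel₀ hα.1.ne', one_smul, add_sub_cancel]
end

section
/- Let Ξ : ℝⁿ → ℝⁿ be C¹ with everywhere symmetric Jacobian and let α ∈ (0,1). If Ξ is α-averaged, then spec(DΞ(x)) ⊆ [1−2α, 1] for all x ∈ ℝⁿ. -/
/-!
Write `Ξ = (1 - α) id + α T` with `T` nonexpansive. At every point `DΞ = (1 - α) + α B`, where `B`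
is the derivative of `T` and hence has operator norm at most `1`, so its spectrum lies in `[-1, 1]`.
The spectrum of `DΞ` is the image of that of `B` under `λ ↦ (1 - α) + α λ`, which maps `[-1, 1]`
onto `[1 - 2α, 1]`.
-/

open Set

def IsAveraged {E : Type*} [NormedAddCommGroup E] [NormedSpace ℝ E] (α : ℝ) (Ξ : E → E) : Prop :=
  ∃ T : E → E, LipschitzWith 1 T ∧ ∀ x, Ξ x = (1 - α) • x + α • T x

theorem spectrum_subset_Icc_of_norm_le_one {A : Type*} [NormedRing A] [NormedAlgebra ℝ A]
    [CompleteSpace A] [NormOneClass A] {b : A} (hb : ‖b‖ ≤ 1) :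
    spectrum ℝ b ⊆ Icc (-1) 1 := fun _ hμ =>
  abs_le.mp ((spectrum.norm_le_norm_of_mem hμ).trans hb)

theorem spectrum_algebraMap_add_smul_subset_Icc {A : Type*} [Ring A] [Algebra ℝ A] {b : A}
    {α : ℝ} (hα : 0 < α) (hb : spectrum ℝ b ⊆ Icc (-1) 1) :
    spectrum ℝ (algebraMap ℝ A (1 - α) + α • b) ⊆ Icc (1 - 2 * α) 1 := by
  intro μ hμ
  rw [← spectrum.singleton_add_eq, ← Units.val_mk0 hα.ne', ← Units.smul_def,
    spectrum.unit_smul_eq_smul] at hμ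
  obtain ⟨c, rfl, _, ⟨lam, hlam, rfl⟩, rfl⟩ := hμ
  obtain ⟨hlam₁, hlam₂⟩ := hb hlam
  simp only [Units.val_mk0, smul_eq_mul, mem_Icc]
  constructor <;> nlinarith

theorem ContinuousLinearMap.spectrum_averaged_subset_Icc {E : Type*} [NormedAddCommGroup E]
    [NormedSpace ℝ E] [CompleteSpace E] {B : E →L[ℝ] E} (hB : ‖B‖ ≤ 1) {α : ℝ} (hα : 0 < α) :
    spectrum ℝ (algebraMap ℝ (E →L[ℝ] E) (1 - α) + α • B) ⊆ Icc (1 - 2 * α) 1 := by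
  rcases subsingleton_or_nontrivial E with hE | hE
  · simp [spectrum.of_subsingleton]
  · exact spectrum_algebraMap_add_smul_subset_Icc hα (spectrum_subset_Icc_of_norm_le_one hB)

theorem IsAveraged.fderiv_eq {E : Type*} [NormedAddCommGroup E] [NormedSpace ℝ E] {α : ℝ}
    {Ξ : E → E} (hΞ : IsAveraged α Ξ) (hα : α ≠ 0) {x : E} (hd : DifferentiableAt ℝ Ξ x) :
    ∃ B : E →L[ℝ] E, ‖B‖ ≤ 1 ∧ fderiv ℝ Ξ x = algebraMap ℝ (E →L[ℝ] E) (1 - α) + α • B := by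
  obtain ⟨T, hT, hΞT⟩ := hΞ
  set B := α⁻¹ • (fderiv ℝ Ξ x - (1 - α) • ContinuousLinearMap.id ℝ E)
  have hT_eq : T = fun y => α⁻¹ • (Ξ y - (1 - α) • y) := by
    funext y
    rw [hΞT y, add_sub_cancel_left, smul_smul, inv_mul_cancel₀ hα, one_smul]
  have hTB : HasFDerivAt T B x := by
    rw [hT_eq]
    exact (hd.hasFDerivAt.sub ((hasFDerivAt_id x).const_smul (1 - α))).const_smul α⁻¹
  refine ⟨B, by simpa using hTB.le_of_lipschitz hT, ?_⟩
  rw [smul_smul, mul_inv_cancel₀ hα, one_smul, Algebra.algebraMap_eq_smul_one,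
    ContinuousLinearMap.one_def]
  abel

theorem stmt11_general (n : ℕ) (Ξ : EuclideanSpace ℝ (Fin n) → EuclideanSpace ℝ (Fin n))
    (hC1 : ContDiff ℝ 1 Ξ)
    (α : ℝ) (hα : α ∈ Set.Ioo (0 : ℝ) 1)
    (hav : ∃ T : EuclideanSpace ℝ (Fin n) → EuclideanSpace ℝ (Fin n),
      LipschitzWith 1 T ∧ ∀ x, Ξ x = (1 - α) • x + α • T x) :
    ∀ x, spectrum ℝ (fderiv ℝ Ξ x) ⊆ Set.Icc (1 - 2 * α) 1 := by
  intro x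
  obtain ⟨B, hB, hDΞ⟩ :=
    IsAveraged.fderiv_eq hav hα.1.ne' (hC1.differentiable one_ne_zero x)
  rw [hDΞ]
  exact B.spectrum_averaged_subset_Icc hB hα.1

theorem stmt11 (n : ℕ) (Ξ : EuclideanSpace ℝ (Fin n) → EuclideanSpace ℝ (Fin n))
    (hC1 : ContDiff ℝ 1 Ξ)
    (hsym : ∀ x u v, inner ℝ (fderiv ℝ Ξ x u) v = (inner ℝ u (fderiv ℝ Ξ x v) : ℝ))
    (α : ℝ) (hα : α ∈ Set.Ioo (0 : ℝ) 1)
    (hav : ∃ T : EuclideanSpace ℝ (Fin n) → EuclideanSpace ℝ (Fin n),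
      LipschitzWith 1 T ∧ ∀ x, Ξ x = (1 - α) • x + α • T x) :
    ∀ x, spectrum ℝ (fderiv ℝ Ξ x) ⊆ Set.Icc (1 - 2 * α) 1 :=
  stmt11_general n Ξ hC1 α hα hav
end

section
/- Let σ : ℝ → ℝ be non-decreasing and L-Lipschitz, A an n × k matrix, b ∈ ℝⁿ, h > 0, and α ∈ (0,1). If h‖A‖² ≤ 2α/L, then the layer Ξ(x) = x − h Aᵀσ(Ax + b) is an α-averaged operator on ℝᵏ. -/
open scoped Matrix RealInnerProductSpace InnerProduct

/-!
Monotonicity and `L`-Lipschitz continuity of `σ` give `(σ p - σ q)² ≤ L (p - q)(σ p - σ q)`, so the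
componentwise map `σ` is cocoercive, and `x ↦ Aᵀ σ(A x + b)` is cocoercive with constant
`L ‖A‖²`. Expanding the square shows that `id - c G` is non-expansive for a cocoercive `G` as soon
as `c L ‖A‖² ≤ 2`; with `c = h / α` this is the hypothesis, and
`x - h G x = (1 - α) x + α (x - (h / α) G x)`.
-/

theorem sq_sub_le_mul_mul_sub_of_monotone {σ : ℝ → ℝ} {L : ℝ} (hmono : Monotone σ)
    (hlip : ∀ a b, |σ a - σ b| ≤ L * |a - b|) (p q : ℝ) :
    (σ p - σ q) ^ 2 ≤ L * ((p - q) * (σ p - σ q)) := by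
  have hsign : 0 ≤ (p - q) * (σ p - σ q) := by
    rcases le_total q p with hqp | hpq
    · exact mul_nonneg (sub_nonneg.2 hqp) (sub_nonneg.2 (hmono hqp))
    · exact mul_nonneg_of_nonpos_of_nonpos (sub_nonpos.2 hpq) (sub_nonpos.2 (hmono hpq))
  calc (σ p - σ q) ^ 2 = |σ p - σ q| * |σ p - σ q| := by rw [← sq_abs, sq]
    _ ≤ L * |p - q| * |σ p - σ q| := by gcongr; exact hlip p q
    _ = L * ((p - q) * (σ p - σ q)) := by rw [mul_assoc, ← abs_mul, abs_of_nonneg hsign]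

section Cocoercive

variable {E F : Type*} [NormedAddCommGroup E] [InnerProductSpace ℝ E]

/-- In the usual terminology this is `1 / L`-cocoercivity. -/
def Cocoercive (L : ℝ) (G : E → E) : Prop :=
  ∀ x y, ‖G x - G y‖ ^ 2 ≤ L * ⟪x - y, G x - G y⟫

theorem Cocoercive.inner_nonneg {L : ℝ} {G : E → E} (hG : Cocoercive L G) (hL : 0 ≤ L)
    (x y : E) : 0 ≤ ⟪x - y, G x - G y⟫ := by
  rcases hL.eq_or_lt with rfl | hL
  · have : G x - G y = 0 := by simpa using hG x y
    simp [this]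
  · exact nonneg_of_mul_nonneg_right ((sq_nonneg _).trans (hG x y)) hL

theorem Cocoercive.lipschitzWith_one_sub_smul {L c : ℝ} {G : E → E} (hG : Cocoercive L G)
    (hL : 0 ≤ L) (hc : 0 ≤ c) (hcL : c * L ≤ 2) : LipschitzWith 1 (fun x => x - c • G x) := by
  refine LipschitzWith.of_dist_le_mul fun x y => ?_
  rw [NNReal.coe_one, one_mul, dist_eq_norm, dist_eq_norm]
  have hI := hG.inner_nonneg hL x y
  have hsq : ‖(x - c • G x) - (y - c • G y)‖ ^ 2 ≤ ‖x - y‖ ^ 2 :=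
    calc ‖(x - c • G x) - (y - c • G y)‖ ^ 2 = ‖(x - y) - c • (G x - G y)‖ ^ 2 := by
          congr 2; module
      _ = ‖x - y‖ ^ 2 - 2 * c * ⟪x - y, G x - G y⟫ + c ^ 2 * ‖G x - G y‖ ^ 2 := by
          rw [norm_sub_sq_real, real_inner_smul_right, norm_smul, mul_pow, Real.norm_eq_abs,
            sq_abs]
          ring
      _ ≤ ‖x - y‖ ^ 2 - 2 * c * ⟪x - y, G x - G y⟫ + c ^ 2 * (L * ⟪x - y, G x - G y⟫) := by
          gcongr; exact hG x y
      _ = ‖x - y‖ ^ 2 - c * (2 - c * L) * ⟪x - y, G x - G y⟫ := by ring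
      _ ≤ ‖x - y‖ ^ 2 := by
          have : 0 ≤ c * (2 - c * L) * ⟪x - y, G x - G y⟫ := by
            have : 0 ≤ 2 - c * L := by linarith
            positivity
          linarith
  exact pow_le_pow_iff_left₀ (norm_nonneg _) (norm_nonneg _) two_ne_zero |>.1 hsq

variable [NormedAddCommGroup F] [InnerProductSpace ℝ F] [CompleteSpace E] [CompleteSpace F]

theorem Cocoercive.adjoint_comp_affine {L : ℝ} {G : F → F} (hG : Cocoercive L G)
    (A : E →L[ℝ] F) (b : F) :
    Cocoercive (L * ‖A‖ ^ 2) (fun x => (A†) (G (A x + b))) := by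
  intro x y
  set d := G (A x + b) - G (A y + b)
  have hd : ‖d‖ ^ 2 ≤ L * ⟪A (x - y), d⟫ := by
    simpa [map_sub, add_sub_add_right_eq_sub] using hG (A x + b) (A y + b)
  calc ‖(A†) (G (A x + b)) - (A†) (G (A y + b))‖ ^ 2 = ‖(A†) d‖ ^ 2 := by rw [map_sub]
    _ ≤ (‖A‖ * ‖d‖) ^ 2 := by
        gcongr
        simpa [LinearIsometryEquiv.norm_map] using (A†).le_opNorm d
    _ = ‖A‖ ^ 2 * ‖d‖ ^ 2 := mul_pow _ _ _
    _ ≤ ‖A‖ ^ 2 * (L * ⟪A (x - y), d⟫) := by gcongr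
    _ = L * ‖A‖ ^ 2 * ⟪x - y, (A†) (G (A x + b)) - (A†) (G (A y + b))⟫ := by
        rw [← map_sub, ContinuousLinearMap.adjoint_inner_right]; ring

end Cocoercive

theorem cocoercive_componentwise {ι : Type*} [Fintype ι] {σ : ℝ → ℝ} {L : ℝ}
    (hmono : Monotone σ) (hlip : ∀ a b, |σ a - σ b| ≤ L * |a - b|) :
    Cocoercive L (fun v : EuclideanSpace ℝ ι => WithLp.toLp 2 (fun i => σ (v i))) := by
  intro u v
  rw [EuclideanSpace.real_norm_sq_eq, PiLp.inner_apply, Finset.mul_sum]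
  exact Finset.sum_le_sum fun i _ => by
    simpa [mul_comm] using sq_sub_le_mul_mul_sub_of_monotone hmono hlip (u i) (v i)

theorem Matrix.toEuclideanLin_transpose_apply {m n : Type*} [Fintype m] [DecidableEq m]
    [Fintype n] [DecidableEq n] (A : Matrix m n ℝ) (v : EuclideanSpace ℝ m) :
    Matrix.toEuclideanLin Aᵀ v =
      ((LinearMap.toContinuousLinearMap (Matrix.toEuclideanLin A))†) v := by
  rw [← Matrix.conjTranspose_eq_transpose_of_trivial,
    Matrix.toEuclideanLin_conjTranspose_eq_adjoint, LinearMap.adjoint_eq_toCLM_adjoint]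
  rfl

theorem stmt13 (n k : ℕ) (σ : ℝ → ℝ) (L : ℝ) (hL : 0 < L)
    (hmono : Monotone σ) (hlip : ∀ a b, |σ a - σ b| ≤ L * |a - b|)
    (A : Matrix (Fin n) (Fin k) ℝ) (b : EuclideanSpace ℝ (Fin n))
    (h : ℝ) (hh : 0 < h) (α : ℝ) (hα : α ∈ Set.Ioo (0 : ℝ) 1)
    (hbound : h * ‖LinearMap.toContinuousLinearMap (Matrix.toEuclideanLin A)‖ ^ 2 ≤ 2 * α / L) :
    ∃ T : EuclideanSpace ℝ (Fin k) → EuclideanSpace ℝ (Fin k),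
      LipschitzWith 1 T ∧
      ∀ x, x - h • (Matrix.toEuclideanLin Aᵀ)
          (WithLp.toLp 2 (fun i => σ ((Matrix.toEuclideanLin A x + b) i))) =
        (1 - α) • x + α • T x := by
  have hα0 : 0 < α := hα.1
  set Aop := LinearMap.toContinuousLinearMap (Matrix.toEuclideanLin A)
  have hG := (cocoercive_componentwise hmono hlip).adjoint_comp_affine Aop b
  refine ⟨fun x => x - (h / α) • (Aop†) (WithLp.toLp 2 fun i => σ ((Aop x + b) i)),
    hG.lipschitzWith_one_sub_smul (by positivity) (by positivity) ?_, fun x => ?_⟩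
  · rw [le_div_iff₀ hL] at hbound
    rw [div_mul_eq_mul_div, div_le_iff₀ hα0]
    linarith
  · rw [Matrix.toEuclideanLin_transpose_apply]
    change x - h • (Aop†) (WithLp.toLp 2 fun i => σ ((Aop x + b) i)) = _
    rw [smul_sub, smul_smul, mul_div_cancel₀ h hα0.ne']
    module
end

section
/- For Heun's method with 𝒜 = [[0,0],[1,0]] and b = (1/2, 1/2), the function K(ζ₁, ζ₂) = 1 + (1/2)ζ₁ + (1/2)ζ₂(1 + ζ₁) satisfies |K(ζ₁, ζ₂)| ≤ 1 for all ζ₁, ζ₂ ∈ ℂ with |ζ₁ + 1| ≤ 1 and |ζ₂ + 1| ≤ 1; i.e., Heun's method is 1-circle contractive. -/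
/-! Shifting by one turns the disc `D(1)` into the closed unit disc: with `wᵢ = ζᵢ + 1`, Heun's
stability function is `K = (1 + w₁ w₂) / 2`, the midpoint of `1` and a point of the unit disc. -/

lemma RCLike.norm_one_add_mul_div_two_le {𝕜 : Type*} [RCLike 𝕜] {x y : 𝕜}
    (hx : ‖x‖ ≤ 1) (hy : ‖y‖ ≤ 1) : ‖(1 + x * y) / 2‖ ≤ 1 := by
  have hxy : ‖x * y‖ ≤ 1 := norm_mul_le_of_le hx hy |>.trans_eq (one_mul 1)
  calc ‖(1 + x * y) / 2‖ = ‖1 + x * y‖ / 2 := by rw [norm_div, RCLike.norm_two]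
    _ ≤ (‖(1 : 𝕜)‖ + ‖x * y‖) / 2 := by gcongr; exact norm_add_le _ _
    _ ≤ 1 := by rw [norm_one]; linarith

theorem stmt19 :
    ∀ ζ₁ ζ₂ : ℂ, ‖ζ₁ + 1‖ ≤ 1 → ‖ζ₂ + 1‖ ≤ 1 →
      ‖1 + ζ₁ / 2 + ζ₂ * (1 + ζ₁) / 2‖ ≤ 1 := by
  intro ζ₁ ζ₂ h₁ h₂
  have hK : 1 + ζ₁ / 2 + ζ₂ * (1 + ζ₁) / 2 = (1 + (ζ₁ + 1) * (ζ₂ + 1)) / 2 := by ring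
  rw [hK]
  exact RCLike.norm_one_add_mul_div_two_le h₁ h₂
end
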